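/- Let Φ = (φ_1,…,φ_n) be a doubly covariant (doubly transitive) equiangular tight frame for ℂ^d with n > d. Then there exists ε ∈ {1, −1}, independent of the choice of indices, such that for every pair of distinct indices j ≠ k, the product over all m from 1 to n of the normalized triple products T̃P(m,j,k) equals ε. -/

import Mathlib

open scoped ComplexInnerProductSpace

noncomputable section

/-- `(φ_1, …, φ_n)` is an equiangular tight frame (ETF) for `ℂ^d`. -/
def IsETF (d n : ℕ) (φ : Fin n → EuclideanSpace ℂ (Fin d)) : Prop :=
  (∀ x : EuclideanSpace ℂ (Fin d), x = ((d : ℂ) / (n : ℂ)) • ∑ j, ⟪φ j, x⟫ • φ j) ∧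
  (∀ j, ‖φ j‖ = 1) ∧
  (∃ α : ℝ, 0 ≤ α ∧ ∀ j k, j ≠ k → ‖⟪φ j, φ k⟫‖ = α)

/-- The triple product `TP(j,k,ℓ) = ⟨φ_j,φ_k⟩⟨φ_k,φ_ℓ⟩⟨φ_ℓ,φ_j⟩`. -/
def TP {d n : ℕ} (φ : Fin n → EuclideanSpace ℂ (Fin d)) (j k l : Fin n) : ℂ :=
  ⟪φ j, φ k⟫ * ⟪φ k, φ l⟫ * ⟪φ l, φ j⟫

/-- The normalized triple product `T̃P(j,k,ℓ) = TP(j,k,ℓ)/|TP(j,k,ℓ)|`. -/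
def nTP {d n : ℕ} (φ : Fin n → EuclideanSpace ℂ (Fin d)) (j k l : Fin n) : ℂ :=
  TP φ j k l / ((‖TP φ j k l‖ : ℝ) : ℂ)

/-- `U` is a symmetry of `φ` with induced permutation `σ`:
`U φ_j φ_j^* U^* = φ_{σ(j)} φ_{σ(j)}^*` for all `j`. -/
def IsSymmetry {d n : ℕ} (φ : Fin n → EuclideanSpace ℂ (Fin d))
    (U : EuclideanSpace ℂ (Fin d) ≃ₗᵢ[ℂ] EuclideanSpace ℂ (Fin d))
    (σ : Equiv.Perm (Fin n)) : Prop :=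
  ∀ j x, U (⟪φ j, U.symm x⟫ • φ j) = ⟪φ (σ j), x⟫ • φ (σ j)

/-- `φ` is doubly covariant: the symmetry group acts 2-transitively on the indices. -/
def DoublyCovariant {d n : ℕ} (φ : Fin n → EuclideanSpace ℂ (Fin d)) : Prop :=
  ∀ j k j' k' : Fin n, j ≠ k → j' ≠ k' →
    ∃ (U : EuclideanSpace ℂ (Fin d) ≃ₗᵢ[ℂ] EuclideanSpace ℂ (Fin d))
      (σ : Equiv.Perm (Fin n)),
      IsSymmetry φ U σ ∧ σ j = j' ∧ σ k = k'

/-!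
A symmetry `U` with permutation `σ` sends each unit vector `φ j` to `c j • φ (σ j)` with
`|c j| = 1`, so `⟪φ j, φ k⟫ = conj (c j) c k ⟪φ (σ j), φ (σ k)⟫` and the phases cancel in every
triple product: triple products are invariant under symmetries. Reindexing the product over `m`
by `σ`, double transitivity makes `∏ m, T̃P(m,j,k)` one number `ε` for all `j ≠ k`. Swapping
`j` and `k` conjugates every triple product, so `ε` is real; since `n > d` the frame is not
orthonormal, hence no inner product vanishes, every `T̃P` has modulus one, and so does `ε`.
-/

open ComplexConjugate

lemma Complex.eq_one_or_eq_neg_one_of_conj_eq {z : ℂ} (hconj : conj z = z) (hz : ‖z‖ = 1) :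
    z = 1 ∨ z = -1 := by
  obtain ⟨r, rfl⟩ := Complex.conj_eq_iff_real.mp hconj
  rw [Complex.norm_real, Real.norm_eq_abs] at hz
  rcases abs_eq zero_le_one |>.mp hz with rfl | rfl
  · exact Or.inl Complex.ofReal_one
  · exact Or.inr (by push_cast; rfl)

section TripleProducts

variable {d n : ℕ} (φ : Fin n → EuclideanSpace ℂ (Fin d))

lemma TP_swap (m j k : Fin n) : TP φ m k j = conj (TP φ m j k) := by
  simp only [TP, map_mul, inner_conj_symm]
  ring

lemma nTP_swap (m j k : Fin n) : nTP φ m k j = conj (nTP φ m j k) := by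
  simp only [nTP, TP_swap φ m j k, map_div₀, Complex.conj_ofReal, RCLike.norm_conj]

lemma norm_nTP {m j k : Fin n} (h : TP φ m j k ≠ 0) : ‖nTP φ m j k‖ = 1 := by
  rw [nTP, norm_div, Complex.norm_real, norm_norm, div_self (norm_ne_zero_iff.mpr h)]

end TripleProducts

namespace IsSymmetry

variable {d n : ℕ} {φ : Fin n → EuclideanSpace ℂ (Fin d)}
  {U : EuclideanSpace ℂ (Fin d) ≃ₗᵢ[ℂ] EuclideanSpace ℂ (Fin d)} {σ : Equiv.Perm (Fin n)}

lemma apply_eq_inner_smul (h : IsSymmetry φ U σ) {j : Fin n} (hj : ‖φ j‖ = 1) :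
    U (φ j) = ⟪φ (σ j), U (φ j)⟫ • φ (σ j) := by
  have hself : ⟪φ j, φ j⟫ = 1 := by simp [inner_self_eq_norm_sq_to_K, hj]
  have := h j (U (φ j))
  rwa [U.symm_apply_apply, hself, one_smul] at this

lemma exists_phase (h : IsSymmetry φ U σ) (hnorm : ∀ j, ‖φ j‖ = 1) :
    ∃ c : Fin n → ℂ, (∀ j, ‖c j‖ = 1) ∧ ∀ j, U (φ j) = c j • φ (σ j) := by
  refine ⟨fun j ↦ ⟪φ (σ j), U (φ j)⟫, fun j ↦ ?_, fun j ↦ h.apply_eq_inner_smul (hnorm j)⟩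
  have := congrArg norm (h.apply_eq_inner_smul (hnorm j))
  rwa [U.norm_map, norm_smul, hnorm, hnorm, mul_one, eq_comm] at this

lemma TP_apply (h : IsSymmetry φ U σ) (hnorm : ∀ j, ‖φ j‖ = 1) (j k l : Fin n) :
    TP φ (σ j) (σ k) (σ l) = TP φ j k l := by
  obtain ⟨c, hc, hUc⟩ := h.exists_phase hnorm
  have hinner : ∀ a b, ⟪φ a, φ b⟫ = conj (c a) * c b * ⟪φ (σ a), φ (σ b)⟫ := fun a b ↦ by
    rw [← U.inner_map_map, hUc, hUc, inner_smul_left, inner_smul_right, mul_assoc]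
  have hsq : ∀ a, conj (c a) * c a = 1 := fun a ↦ by
    rw [← Complex.normSq_eq_conj_mul_self, Complex.normSq_eq_norm_sq, hc]
    norm_num
  calc TP φ (σ j) (σ k) (σ l)
      = (conj (c j) * c j) * (conj (c k) * c k) * (conj (c l) * c l) *
          TP φ (σ j) (σ k) (σ l) := by rw [hsq, hsq, hsq, one_mul, one_mul, one_mul]
    _ = TP φ j k l := by
      simp only [TP, hinner j k, hinner k l, hinner l j]
      ring

lemma nTP_apply (h : IsSymmetry φ U σ) (hnorm : ∀ j, ‖φ j‖ = 1) (j k l : Fin n) :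
    nTP φ (σ j) (σ k) (σ l) = nTP φ j k l := by
  simp only [nTP, h.TP_apply hnorm]

lemma prod_nTP_apply (h : IsSymmetry φ U σ) (hnorm : ∀ j, ‖φ j‖ = 1) (j k : Fin n) :
    ∏ m, nTP φ m (σ j) (σ k) = ∏ m, nTP φ m j k := by
  rw [← Equiv.prod_comp σ]
  exact Finset.prod_congr rfl fun m _ ↦ h.nTP_apply hnorm m j k

end IsSymmetry

lemma DoublyCovariant.prod_nTP_eq {d n : ℕ} {φ : Fin n → EuclideanSpace ℂ (Fin d)}
    (hcov : DoublyCovariant φ) (hnorm : ∀ j, ‖φ j‖ = 1) {j k j' k' : Fin n} (hjk : j ≠ k)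
    (hjk' : j' ≠ k') : ∏ m, nTP φ m j k = ∏ m, nTP φ m j' k' := by
  obtain ⟨U, σ, hsym, rfl, rfl⟩ := hcov j k j' k' hjk hjk'
  exact (hsym.prod_nTP_apply hnorm j k).symm

namespace IsETF

variable {d n : ℕ} {φ : Fin n → EuclideanSpace ℂ (Fin d)}

lemma inner_ne_zero (hETF : IsETF d n φ) (hnd : d < n) (j k : Fin n) : ⟪φ j, φ k⟫ ≠ 0 := by
  obtain ⟨-, hnorm, α, -, hα⟩ := hETF
  intro hjk
  by_cases hj : j = k
  · subst hj
    simp [inner_self_eq_norm_sq_to_K, hnorm] at hjk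
  have hα0 : α = 0 := by rw [← hα j k hj, hjk, norm_zero]
  have horth : Orthonormal ℂ φ :=
    ⟨hnorm, fun {a b} hab ↦ norm_eq_zero.mp (hα0 ▸ hα a b hab)⟩
  have := horth.linearIndependent.fintype_card_le_finrank
  simp only [Fintype.card_fin, finrank_euclideanSpace_fin] at this
  omega

lemma TP_ne_zero (hETF : IsETF d n φ) (hnd : d < n) (j k l : Fin n) : TP φ j k l ≠ 0 := by
  simp only [TP, mul_ne_zero_iff]
  exact ⟨⟨hETF.inner_ne_zero hnd j k, hETF.inner_ne_zero hnd k l⟩, hETF.inner_ne_zero hnd l j⟩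

end IsETF

theorem doubly_covariant_sign {d n : ℕ}
    (φ : Fin n → EuclideanSpace ℂ (Fin d)) (hETF : IsETF d n φ)
    (hcov : DoublyCovariant φ) (hnd : d < n) :
    ∃ ε : ℂ, (ε = 1 ∨ ε = -1) ∧
      ∀ j k : Fin n, j ≠ k → ∏ m, nTP φ m j k = ε := by
  have hnorm := hETF.2.1
  by_cases hpair : ∃ j₀ k₀ : Fin n, j₀ ≠ k₀
  swap
  · simp only [not_exists, not_not] at hpair
    exact ⟨1, Or.inl rfl, fun j k hjk ↦ absurd (hpair j k) hjk⟩
  obtain ⟨j₀, k₀, hj₀k₀⟩ := hpair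
  refine ⟨∏ m, nTP φ m j₀ k₀, ?_, fun j k hjk ↦ hcov.prod_nTP_eq hnorm hjk hj₀k₀⟩
  apply Complex.eq_one_or_eq_neg_one_of_conj_eq
  · rw [map_prod]
    simp_rw [← nTP_swap]
    exact hcov.prod_nTP_eq hnorm hj₀k₀.symm hj₀k₀
  · rw [norm_prod]
    exact Finset.prod_eq_one fun m _ ↦ norm_nTP φ (hETF.TP_ne_zero hnd m j₀ k₀)
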